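/- arXiv:math/0703915 — 2 statements merged into one kernel-verified Lean document; each statement's English description precedes it below -/
import Mathlib

section
/- Let f : ℝⁿ → ℝ be of class C¹ and let y : ℝ → ℝⁿ be a differentiable curve satisfying y'(t) = ∇f(y(t)) for all t. If y(0) = y(T) for some T > 0, then y is constant on the interval [0, T]. In particular, the gradient flow of f has no nonconstant periodic orbits. -/
/-!
Along a gradient line `y` the function `f ∘ y` has derivative `‖∇f (y t)‖²`, so it is monotone.
If `y` returns to its starting point at time `T`, then `f ∘ y` is constant on `[0, T]`; its
right derivative, hence `‖∇f (y t)‖²`, vanishes on `[0, T)`. Thus `y` has zero right derivative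
there and is constant on `[0, T]`.
-/

open Set Filter Topology
open scoped Gradient

theorem HasDerivWithinAt.eq_zero_of_eqOn_Icc {F : Type*} [NormedAddCommGroup F] [NormedSpace ℝ F]
    {g : ℝ → F} {g' : F} {a b t : ℝ}
    (hg : HasDerivWithinAt g g' (Ici t) t) (hconst : EqOn g (fun _ ↦ g a) (Icc a b))
    (ht : t ∈ Ico a b) : g' = 0 := by
  have hnear : Icc a b ∈ 𝓝[≥] t :=
    mem_of_superset (Icc_mem_nhdsGE ht.2) (Icc_subset_Icc_left ht.1)
  have hconst' : HasDerivWithinAt g 0 (Ici t) t :=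
    (hasDerivWithinAt_const t _ (g a)).congr_of_eventuallyEq (mem_of_superset hnear hconst)
      (hconst (Ico_subset_Icc_self ht))
  exact (uniqueDiffWithinAt_Ici t).eq_deriv _ hg hconst'

variable {E : Type*} [NormedAddCommGroup E] [InnerProductSpace ℝ E] [CompleteSpace E]

def IsGradientLine (f : E → ℝ) (y : ℝ → E) : Prop :=
  ∀ t, HasDerivAt y (∇ f (y t)) t

namespace IsGradientLine

variable {f : E → ℝ} {y : ℝ → E}

theorem hasDerivAt_comp (hy : IsGradientLine f y) (hf : Differentiable ℝ f) (t : ℝ) :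
    HasDerivAt (f ∘ y) (‖∇ f (y t)‖ ^ 2) t := by
  have := ((hf (y t)).hasGradientAt.hasFDerivAt).comp_hasDerivAt t (hy t)
  simpa only [InnerProductSpace.toDual_apply_apply, real_inner_self_eq_norm_sq] using this

theorem monotone_comp (hy : IsGradientLine f y) (hf : Differentiable ℝ f) : Monotone (f ∘ y) :=
  monotone_of_hasDerivAt_nonneg (hy.hasDerivAt_comp hf) fun _ ↦ by positivity

theorem eqOn_Icc_of_comp_eq (hy : IsGradientLine f y) (hf : Differentiable ℝ f) {a b : ℝ}
    (hab : f (y a) = f (y b)) : EqOn y (fun _ ↦ y a) (Icc a b) := by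
  have hlevel : EqOn (f ∘ y) (fun _ ↦ f (y a)) (Icc a b) := fun t ht ↦
    le_antisymm (hab ▸ hy.monotone_comp hf ht.2) (hy.monotone_comp hf ht.1)
  have hcrit : ∀ t ∈ Ico a b, ∇ f (y t) = 0 := fun t ht ↦ by
    simpa using (hy.hasDerivAt_comp hf t).hasDerivWithinAt.eq_zero_of_eqOn_Icc hlevel ht
  refine constant_of_has_deriv_right_zero (fun t _ ↦ (hy t).continuousAt.continuousWithinAt)
    fun t ht ↦ ?_
  simpa only [hcrit t ht] using (hy t).hasDerivWithinAt

end IsGradientLine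

theorem gradient_line_no_periodic_orbit_general {n : ℕ}
    (f : EuclideanSpace ℝ (Fin n) → ℝ) (hf : ContDiff ℝ 1 f)
    (y : ℝ → EuclideanSpace ℝ (Fin n))
    (hy : ∀ t, HasDerivAt y (gradient f (y t)) t)
    (T : ℝ) (hper : y 0 = y T) :
    ∀ t ∈ Set.Icc (0 : ℝ) T, y t = y 0 :=
  IsGradientLine.eqOn_Icc_of_comp_eq hy (hf.differentiable one_ne_zero) (congrArg f hper)

/-- A gradient line of a `C¹` function `f : ℝⁿ → ℝ` which returns to its starting
point is constant on the corresponding time interval: the gradient flow has no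
nonconstant periodic orbits. -/
theorem gradient_line_no_periodic_orbit {n : ℕ}
    (f : EuclideanSpace ℝ (Fin n) → ℝ) (hf : ContDiff ℝ 1 f)
    (y : ℝ → EuclideanSpace ℝ (Fin n))
    (hy : ∀ t, HasDerivAt y (gradient f (y t)) t)
    (T : ℝ) (hT : 0 < T) (hper : y 0 = y T) :
    ∀ t ∈ Set.Icc (0 : ℝ) T, y t = y 0 :=
  gradient_line_no_periodic_orbit_general f hf y hy T hper
end

section
/- Let ε ≠ 0 and a, b, c ∈ ℝ with a + c ≠ 0, and let f̃ : ℝ² → ℝ be the perturbed elliptic umbilic generating function f̃(y₁, y₂) = (1/3)y₁³ − y₁y₂² + (ε/2)(a y₁² + b y₁y₂ + c y₂²). Then the critical locus {(y₁, y₂) ∈ ℝ² : det Hess f̃(y₁, y₂) = 0} is exactly the circle with centre C = (−ε(a−c)/4, εb/4) and radius |ε(a+c)|/4, and consequently the caustic of f̃ is the image of this circle under the map ∇f̃(y₁, y₂) = (y₁² − y₂² + ε(a y₁ + (b/2) y₂), −2y₁y₂ + ε((b/2) y₁ + c y₂)). -/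
/-- The point of `ℝ²` (with the Euclidean norm) with coordinates `a`, `b`. -/
noncomputable def pt (a b : ℝ) : EuclideanSpace ℝ (Fin 2) :=
  (WithLp.equiv 2 (Fin 2 → ℝ)).symm ![a, b]

/-- The Hessian matrix of `f : ℝ² → ℝ` at `y`. -/
noncomputable def Hess (f : EuclideanSpace ℝ (Fin 2) → ℝ)
    (y : EuclideanSpace ℝ (Fin 2)) : Matrix (Fin 2) (Fin 2) ℝ :=
  Matrix.of fun i j =>
    fderiv ℝ (fun z => fderiv ℝ f z (EuclideanSpace.single j 1)) y (EuclideanSpace.single i 1)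

/-- The elliptic umbilic generating function perturbed by a quadratic form. -/
noncomputable def perturbedEllipticUmbilic (ε a b c : ℝ) :
    EuclideanSpace ℝ (Fin 2) → ℝ :=
  fun y => (1 / 3) * (y 0) ^ 3 - (y 0) * (y 1) ^ 2 +
    (ε / 2) * (a * (y 0) ^ 2 + b * (y 0) * (y 1) + c * (y 1) ^ 2)

/-- The Lagrangian map associated with the perturbed elliptic umbilic. -/
noncomputable def perturbedEllipticUmbilicMap (ε a b c : ℝ) :
    EuclideanSpace ℝ (Fin 2) → EuclideanSpace ℝ (Fin 2) :=
  fun y => pt ((y 0) ^ 2 - (y 1) ^ 2 + ε * (a * (y 0) + (b / 2) * (y 1)))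
    (-2 * (y 0) * (y 1) + ε * ((b / 2) * (y 0) + c * (y 1)))

/-!
The Hessian of `f̃` is `[[2y₁ + εa, -2y₂ + εb/2], [-2y₂ + εb/2, -2y₁ + εc]]`, and completing squares
gives `det Hess f̃ (y) = -4 (‖y - C‖² - (ε (a + c) / 4)²)`.
-/

open EuclideanSpace

@[simp] lemma pt_apply_zero (a b : ℝ) : pt a b 0 = a := rfl

@[simp] lemma pt_apply_one (a b : ℝ) : pt a b 1 = b := rfl

lemma norm_sub_pt_sq (y : EuclideanSpace ℝ (Fin 2)) (p q : ℝ) :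
    ‖y - pt p q‖ ^ 2 = (y 0 - p) ^ 2 + (y 1 - q) ^ 2 := by
  simp [EuclideanSpace.norm_sq_eq, Fin.sum_univ_two]

lemma HasGradientAt.fderiv_single {ι : Type*} [Fintype ι] [DecidableEq ι]
    {f : EuclideanSpace ℝ ι → ℝ} {g y : EuclideanSpace ℝ ι} (h : HasGradientAt f g y) (i : ι) :
    fderiv ℝ f y (single i 1) = g i := by
  simp [h.fderiv_apply, inner_single_right]

lemma hasGradientAt_pt_of_hasFDerivAt {f : EuclideanSpace ℝ (Fin 2) → ℝ} {p q : ℝ}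
    {y : EuclideanSpace ℝ (Fin 2)} (h : HasFDerivAt f (p • proj (𝕜 := ℝ) 0 + q • proj 1) y) :
    HasGradientAt f (pt p q) y := by
  rw [hasGradientAt_iff_hasFDerivAt]
  refine h.congr_fderiv (ContinuousLinearMap.ext fun v => ?_)
  simp [PiLp.inner_apply, Fin.sum_univ_two, mul_comm]

lemma hess_eq_of_hasGradientAt {f : EuclideanSpace ℝ (Fin 2) → ℝ}
    {G : EuclideanSpace ℝ (Fin 2) → EuclideanSpace ℝ (Fin 2)} {y : EuclideanSpace ℝ (Fin 2)}
    {H : Fin 2 → EuclideanSpace ℝ (Fin 2)} (hf : ∀ z, HasGradientAt f (G z) z)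
    (hG : ∀ j, HasGradientAt (fun z => G z j) (H j) y) :
    Hess f y = Matrix.of fun i j => H j i := by
  ext i j
  simp only [Hess, Matrix.of_apply, fun z => (hf z).fderiv_single, (hG j).fderiv_single]

section PerturbedEllipticUmbilic

variable (ε a b c : ℝ) (y : EuclideanSpace ℝ (Fin 2))

lemma hasGradientAt_perturbedEllipticUmbilic :
    HasGradientAt (perturbedEllipticUmbilic ε a b c) (perturbedEllipticUmbilicMap ε a b c y) y := by
  have h0 := (proj (𝕜 := ℝ) (0 : Fin 2)).hasFDerivAt (x := y)
  have h1 := (proj (𝕜 := ℝ) (1 : Fin 2)).hasFDerivAt (x := y)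
  have H := (((h0.pow 3).const_mul (1 / 3)).sub (h0.mul (h1.pow 2))).add
    (((((h0.pow 2).const_mul a).add ((h0.const_mul b).mul h1)).add
      ((h1.pow 2).const_mul c)).const_mul (ε / 2))
  refine hasGradientAt_pt_of_hasFDerivAt (H.congr_fderiv ?_)
  ext v
  simp only [PiLp.proj_apply, add_apply, sub_apply, smul_apply, smul_eq_mul, nsmul_eq_mul]
  ring

lemma hasGradientAt_perturbedEllipticUmbilicMap_zero :
    HasGradientAt (fun z => perturbedEllipticUmbilicMap ε a b c z 0)
      (pt (2 * y 0 + ε * a) (-2 * y 1 + ε * (b / 2))) y := by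
  have h0 := (proj (𝕜 := ℝ) (0 : Fin 2)).hasFDerivAt (x := y)
  have h1 := (proj (𝕜 := ℝ) (1 : Fin 2)).hasFDerivAt (x := y)
  have H := ((h0.pow 2).sub (h1.pow 2)).add
    (((h0.const_mul a).add (h1.const_mul (b / 2))).const_mul ε)
  refine hasGradientAt_pt_of_hasFDerivAt (H.congr_fderiv ?_)
  ext v
  simp only [PiLp.proj_apply, add_apply, sub_apply, smul_apply, smul_eq_mul, nsmul_eq_mul]
  ring

lemma hasGradientAt_perturbedEllipticUmbilicMap_one :
    HasGradientAt (fun z => perturbedEllipticUmbilicMap ε a b c z 1)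
      (pt (-2 * y 1 + ε * (b / 2)) (-2 * y 0 + ε * c)) y := by
  have h0 := (proj (𝕜 := ℝ) (0 : Fin 2)).hasFDerivAt (x := y)
  have h1 := (proj (𝕜 := ℝ) (1 : Fin 2)).hasFDerivAt (x := y)
  have H := ((h0.const_mul (-2)).mul h1).add
    (((h0.const_mul (b / 2)).add (h1.const_mul c)).const_mul ε)
  refine hasGradientAt_pt_of_hasFDerivAt (H.congr_fderiv ?_)
  ext v
  simp only [PiLp.proj_apply, add_apply, smul_apply, smul_eq_mul]
  ring

lemma hess_perturbedEllipticUmbilic :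
    Hess (perturbedEllipticUmbilic ε a b c) y =
      !![2 * y 0 + ε * a, -2 * y 1 + ε * (b / 2); -2 * y 1 + ε * (b / 2), -2 * y 0 + ε * c] := by
  rw [hess_eq_of_hasGradientAt (hasGradientAt_perturbedEllipticUmbilic ε a b c) (H := ![_, _])
    (Fin.forall_fin_two.2 ⟨hasGradientAt_perturbedEllipticUmbilicMap_zero ε a b c y,
      hasGradientAt_perturbedEllipticUmbilicMap_one ε a b c y⟩)]
  ext i j
  fin_cases i <;> fin_cases j <;> simp

lemma det_hess_perturbedEllipticUmbilic_eq_zero_iff :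
    (Hess (perturbedEllipticUmbilic ε a b c) y).det = 0 ↔
      ‖y - pt (-(ε * (a - c)) / 4) (ε * b / 4)‖ = |ε * (a + c)| / 4 := by
  have hdet : (Hess (perturbedEllipticUmbilic ε a b c) y).det =
      -4 * (‖y - pt (-(ε * (a - c)) / 4) (ε * b / 4)‖ ^ 2 - (|ε * (a + c)| / 4) ^ 2) := by
    rw [hess_perturbedEllipticUmbilic, Matrix.det_fin_two_of, norm_sub_pt_sq, div_pow, sq_abs]
    ring
  rw [hdet, mul_eq_zero, sub_eq_zero, sq_eq_sq₀ (norm_nonneg _) (by positivity)]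
  norm_num

end PerturbedEllipticUmbilic

theorem perturbedEllipticUmbilic_caustic_general (ε a b c : ℝ) :
    (∀ y, gradient (perturbedEllipticUmbilic ε a b c) y =
        perturbedEllipticUmbilicMap ε a b c y) ∧
    {y | (Hess (perturbedEllipticUmbilic ε a b c) y).det = 0} =
      {y | ‖y - pt (-(ε * (a - c)) / 4) (ε * b / 4)‖ = |ε * (a + c)| / 4} ∧
    perturbedEllipticUmbilicMap ε a b c ''
        {y | (Hess (perturbedEllipticUmbilic ε a b c) y).det = 0} =
      perturbedEllipticUmbilicMap ε a b c ''
        {y | ‖y - pt (-(ε * (a - c)) / 4) (ε * b / 4)‖ = |ε * (a + c)| / 4} := by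
  have hlocus : {y | (Hess (perturbedEllipticUmbilic ε a b c) y).det = 0} =
      {y | ‖y - pt (-(ε * (a - c)) / 4) (ε * b / 4)‖ = |ε * (a + c)| / 4} :=
    Set.ext (det_hess_perturbedEllipticUmbilic_eq_zero_iff ε a b c)
  exact ⟨fun y => (hasGradientAt_perturbedEllipticUmbilic ε a b c y).gradient, hlocus,
    by rw [hlocus]⟩

/-- For the perturbed elliptic umbilic
`f̃(y₁,y₂) = (1/3)y₁³ − y₁y₂² + (ε/2)(ay₁² + by₁y₂ + cy₂²)` with `ε ≠ 0` and
`a + c ≠ 0`: its Lagrangian map is `∇f̃`, the critical locus is exactly the circle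
with centre `C = (−ε(a−c)/4, εb/4)` and radius `|ε(a+c)|/4`, and the caustic is the
image of this circle under `∇f̃`. -/
theorem perturbedEllipticUmbilic_caustic (ε a b c : ℝ) (hε : ε ≠ 0)
    (hac : a + c ≠ 0) :
    (∀ y, gradient (perturbedEllipticUmbilic ε a b c) y =
        perturbedEllipticUmbilicMap ε a b c y) ∧
    {y | (Hess (perturbedEllipticUmbilic ε a b c) y).det = 0} =
      {y | ‖y - pt (-(ε * (a - c)) / 4) (ε * b / 4)‖ = |ε * (a + c)| / 4} ∧
    perturbedEllipticUmbilicMap ε a b c ''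
        {y | (Hess (perturbedEllipticUmbilic ε a b c) y).det = 0} =
      perturbedEllipticUmbilicMap ε a b c ''
        {y | ‖y - pt (-(ε * (a - c)) / 4) (ε * b / 4)‖ = |ε * (a + c)| / 4} :=
  perturbedEllipticUmbilic_caustic_general ε a b c
end
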